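/- arXiv:2208.06539 — 4 statements merged into one kernel-verified Lean document; each statement's English description precedes it below -/
import Mathlib

section
/- For a completely regular topological space X and a finite signed Borel (or Baire) measure μ on X, the total variation norm satisfies ‖μ‖ = sup { ∫ f dμ : f continuous bounded, ‖f‖_∞ ≤ 1 }. -/
/-!
Write `|μ| = P + N` with `P ⟂ₘ N` the Jordan decomposition. For `‖f‖ ≤ 1` the pairing
`∫ f dP - ∫ f dN` is at most `P X + N X`. Conversely, fix a Hahn set `S` (`P S = 0`,
`N Sᶜ = 0`); regularity of `|μ|` gives a compact closed `K ⊆ S` carrying all but `ε` of `N`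
and an open `U ⊇ K` carrying less than `ε` of `P`. A continuous `f` with values in `[-1, 1]`,
equal to `-1` on `K` and to `1` off `U`, then pairs to more than `P X + N X - 4ε`.
-/

open MeasureTheory Set
open scoped BoundedContinuousFunction ENNReal

section

variable {X : Type*}

/-- Urysohn's lemma in the compact Hausdorff space `StoneCech X`, pulled back along the
inducing map `stoneCechUnit`. -/
theorem exists_bounded_mem_Icc_of_isCompact_subset_isOpen [TopologicalSpace X]
    [CompletelyRegularSpace X] {K U : Set X} (hK : IsCompact K) (hU : IsOpen U) (hKU : K ⊆ U)
    {a b : ℝ} (hab : a ≤ b) :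
    ∃ f : X →ᵇ ℝ, EqOn f (Function.const X a) K ∧ EqOn f (Function.const X b) Uᶜ ∧
      ∀ x, f x ∈ Icc a b := by
  obtain ⟨W, hW, rfl⟩ := isInducing_stoneCechUnit.isOpen_iff.1 hU
  have hdisj : Disjoint (stoneCechUnit '' K) Wᶜ :=
    disjoint_compl_right_iff_subset.2 (image_subset_iff.2 hKU)
  obtain ⟨g, hgK, hgW, hg⟩ := exists_bounded_mem_Icc_of_closed_of_le
    (hK.image continuous_stoneCechUnit).isClosed hW.isClosed_compl hdisj hab
  exact ⟨g.compContinuous ⟨stoneCechUnit, continuous_stoneCechUnit⟩,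
    fun x hx => hgK (mem_image_of_mem _ hx), fun x hx => hgW hx, fun x => hg _⟩

variable [MeasurableSpace X]

theorem measureReal_univ_sub_two_mul_le_integral {m : Measure X} [IsFiniteMeasure m]
    {f : X → ℝ} (hf : Integrable f m) (hf_ge : ∀ x, -1 ≤ f x) {t : Set X}
    (ht : MeasurableSet t) (hft : ∀ x ∉ t, 1 ≤ f x) :
    m.real univ - 2 * m.real t ≤ ∫ x, f x ∂m := by
  have hind : Integrable (t.indicator fun _ => (2 : ℝ)) m :=
    (integrable_indicator_iff ht).2 (integrableOn_const (measure_ne_top _ _))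
  calc m.real univ - 2 * m.real t = ∫ x, (1 - t.indicator (fun _ => (2 : ℝ)) x) ∂m := by
        rw [integral_sub (integrable_const 1) hind, integral_const, integral_indicator_const _ ht]
        simp [mul_comm]
    _ ≤ ∫ x, f x ∂m := by
        refine integral_mono ((integrable_const 1).sub hind) hf fun x => ?_
        by_cases hx : x ∈ t
        · simp only [indicator_of_mem hx]; linarith [hf_ge x]
        · simp only [indicator_of_notMem hx]; linarith [hft x hx]

variable [TopologicalSpace X] {P N : Measure X} [IsFiniteMeasure P] [IsFiniteMeasure N]

theorem MeasureTheory.Measure.MutuallySingular.exists_isCompact_isClosed_subset_isOpen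
    [BorelSpace X] [R1Space X] [(P + N).Regular] (hPN : P ⟂ₘ N) {ε : ℝ≥0∞} (hε : ε ≠ 0) :
    ∃ K U, IsCompact K ∧ IsClosed K ∧ IsOpen U ∧ K ⊆ U ∧ N Kᶜ < ε ∧ P U < ε := by
  obtain ⟨S, hS, hPS, hNS⟩ := hPN
  obtain ⟨K, hKS, hKc, hKcl, hSK⟩ :=
    hS.exists_isCompact_isClosed_sdiff_lt (μ := P + N) (measure_ne_top _ _) hε
  obtain ⟨U, hKU, hU, -, hUK⟩ :=
    hKcl.measurableSet.exists_isOpen_sdiff_lt (μ := P + N) (measure_ne_top _ _) hε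
  refine ⟨K, U, hKc, hKcl, hU, hKU, ?_, ?_⟩
  · calc N Kᶜ = N (Kᶜ ∩ S) := (measure_inter_conull hNS).symm
      _ = N (S \ K) := by rw [inter_comm, sdiff_eq]
      _ ≤ (P + N) (S \ K) := Measure.le_add_left le_rfl _
      _ < ε := hSK
  · calc P U = P (U \ K) := (measure_sdiff_null (measure_mono_null hKS hPS)).symm
      _ ≤ (P + N) (U \ K) := Measure.le_add_right le_rfl _
      _ < ε := hUK

theorem BoundedContinuousFunction.integral_sub_integral_le [OpensMeasurableSpace X]
    (f : X →ᵇ ℝ) (hf : ‖f‖ ≤ 1) :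
    ∫ x, f x ∂P - ∫ x, f x ∂N ≤ (P + N).real univ := by
  have hbound (m : Measure X) [IsFiniteMeasure m] : |∫ x, f x ∂m| ≤ m.real univ :=
    calc |∫ x, f x ∂m| ≤ m.real univ * ‖f‖ := f.norm_integral_le_mul_norm m
      _ ≤ m.real univ := mul_le_of_le_one_right measureReal_nonneg hf
  rw [measureReal_add_apply]
  linarith [le_abs_self (∫ x, f x ∂P), neg_abs_le (∫ x, f x ∂N), hbound P, hbound N]

theorem MeasureTheory.Measure.MutuallySingular.exists_lt_integral_sub_integral
    [CompletelyRegularSpace X] [BorelSpace X] [(P + N).Regular] (hPN : P ⟂ₘ N)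
    {ε : ℝ} (hε : 0 < ε) :
    ∃ f : X →ᵇ ℝ, ‖f‖ ≤ 1 ∧ (P + N).real univ - ε < ∫ x, f x ∂P - ∫ x, f x ∂N := by
  have hε' : ENNReal.ofReal (ε / 4) ≠ 0 := (ENNReal.ofReal_pos.2 (by linarith)).ne'
  obtain ⟨K, U, hKc, hKcl, hU, hKU, hNK, hPU⟩ := hPN.exists_isCompact_isClosed_subset_isOpen hε'
  obtain ⟨f, hfK, hfU, hf⟩ :=
    exists_bounded_mem_Icc_of_isCompact_subset_isOpen hKc hU hKU (by norm_num : (-1 : ℝ) ≤ 1)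
  refine ⟨f, (f.norm_le zero_le_one).2 fun x => abs_le.2 (hf x), ?_⟩
  have hP : P.real univ - 2 * P.real U ≤ ∫ x, f x ∂P :=
    measureReal_univ_sub_two_mul_le_integral (f.integrable P) (fun x => (hf x).1)
      hU.measurableSet fun x hx => (hfU hx).ge
  have hN : N.real univ - 2 * N.real Kᶜ ≤ ∫ x, -f x ∂N :=
    measureReal_univ_sub_two_mul_le_integral (f := fun x => -f x) (f.integrable N).neg
      (fun x => neg_le_neg (hf x).2) hKcl.measurableSet.compl
      fun x hx => by simp [hfK (not_not.1 hx)]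
  have hPU' : P.real U < ε / 4 := ENNReal.toReal_lt_of_lt_ofReal hPU
  have hNK' : N.real Kᶜ < ε / 4 := ENNReal.toReal_lt_of_lt_ofReal hNK
  rw [integral_neg] at hN
  rw [measureReal_add_apply]
  linarith

theorem MeasureTheory.Measure.MutuallySingular.sSup_integral_sub_integral_eq
    [CompletelyRegularSpace X] [BorelSpace X] [(P + N).Regular] (hPN : P ⟂ₘ N) :
    sSup { r : ℝ | ∃ f : X →ᵇ ℝ, ‖f‖ ≤ 1 ∧ r = ∫ x, f x ∂P - ∫ x, f x ∂N } =
      (P + N).real univ := by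
  refine csSup_eq_of_forall_le_of_forall_lt_exists_gt ⟨_, 0, by simp, rfl⟩ ?_ fun w hw => ?_
  · rintro r ⟨f, hf, rfl⟩
    exact f.integral_sub_integral_le hf
  · obtain ⟨f, hf, hlt⟩ := hPN.exists_lt_integral_sub_integral (sub_pos.2 hw)
    exact ⟨_, ⟨f, hf, rfl⟩, by linarith⟩

end

/-- For a completely regular topological space `X` and a finite signed Borel measure `μ`
(assumed regular, i.e. a Radon-type measure), the total variation norm of `μ` equals the
supremum of `∫ f dμ` over bounded continuous functions `f` with `‖f‖_∞ ≤ 1`, where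
`∫ f dμ` is the integral against the Jordan decomposition of `μ`. -/
theorem tvNorm_eq_sSup_boundedContinuous {X : Type*} [TopologicalSpace X]
    [CompletelyRegularSpace X] [MeasurableSpace X] [BorelSpace X]
    (μ : SignedMeasure X) (hreg : μ.totalVariation.Regular) :
    (μ.totalVariation Set.univ).toReal =
      sSup { r : ℝ | ∃ f : BoundedContinuousFunction X ℝ, ‖f‖ ≤ 1 ∧
        r = (∫ x, f x ∂μ.toJordanDecomposition.posPart) -
            ∫ x, f x ∂μ.toJordanDecomposition.negPart } :=
  have : (μ.toJordanDecomposition.posPart + μ.toJordanDecomposition.negPart).Regular := hreg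
  μ.toJordanDecomposition.mutuallySingular.sSup_integral_sub_integral_eq.symm
end

section
/- If a family of finite measures μ(t) = f(t)·ν is L^2(ν)-differentiable at t₀ with derivative Φ'(t₀) of Φ(t) = f(t)^{1/2} in L^2(ν), then the total-variation derivative μ'(t₀) satisfies μ'(t₀) = 2·f(t₀)^{1/2}·Φ'(t₀)·ν, and in particular its density with respect to ν lies in L^1(ν). -/
/-!
Since `f t = (Φ t)²` a.e., the signed measure `s⁻¹ (μ (t₀ + s) - μ t₀) - 2 √(f t₀) D · ν` has
the density `s⁻¹ ((Φ (t₀ + s))² - (Φ t₀)²) - 2 Φ t₀ D`, and its total variation is the `L¹` norm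
of that density. Factoring `a² - b² = (a - b)(a + b)` and applying Cauchy–Schwarz bounds this
`L¹` norm by `‖s⁻¹ (Φ (t₀ + s) - Φ t₀) - D‖₂ ‖Φ (t₀ + s) + Φ t₀‖₂ + ‖D‖₂ ‖Φ (t₀ + s) - Φ t₀‖₂`,
which tends to `0` by `L²`-differentiability of `Φ`.
-/

open MeasureTheory Filter Topology

namespace MeasureTheory

variable {X : Type*} [MeasurableSpace X] {ν : Measure X}

lemma L2.integrable_mul (u v : Lp ℝ 2 ν) : Integrable (fun x => u x * v x) ν := by
  simpa [mul_comm] using L2.integrable_inner (𝕜 := ℝ) u v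

lemma L2.integral_abs_mul_le (u v : Lp ℝ 2 ν) : ∫ x, |u x * v x| ∂ν ≤ ‖u‖ * ‖v‖ := by
  have h_inner : ∫ x, |u x * v x| ∂ν = inner ℝ |u| |v| := by
    rw [L2.inner_def]
    refine integral_congr_ae ?_
    filter_upwards [Lp.coeFn_abs u, Lp.coeFn_abs v] with x hu hv
    simp [hu, hv, abs_mul, mul_comm]
  calc ∫ x, |u x * v x| ∂ν = inner ℝ |u| |v| := h_inner
    _ ≤ ‖|u|‖ * ‖|v|‖ := real_inner_le_norm _ _
    _ = ‖u‖ * ‖v‖ := by rw [norm_abs_eq_norm, norm_abs_eq_norm]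

lemma L2.integral_abs_smul_sq_sub_sq_sub_le (u v w : Lp ℝ 2 ν) (c : ℝ) :
    ∫ x, |c * (u x ^ 2 - v x ^ 2) - 2 * v x * w x| ∂ν
      ≤ ‖c • (u - v) - w‖ * ‖u + v‖ + ‖w‖ * ‖u - v‖ := by
  set q := c • (u - v) - w
  have hq := L2.integrable_mul q (u + v)
  have hw := L2.integrable_mul w (u - v)
  have h_factor : (fun x => c * (u x ^ 2 - v x ^ 2) - 2 * v x * w x)
      =ᵐ[ν] fun x => q x * (u + v) x + w x * (u - v) x := by
    filter_upwards [Lp.coeFn_sub (c • (u - v)) w, Lp.coeFn_smul c (u - v), Lp.coeFn_sub u v,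
      Lp.coeFn_add u v] with x hq hs hsub hadd
    simp only [q, hq, Pi.sub_apply, hs, Pi.smul_apply, hsub, hadd, Pi.add_apply, smul_eq_mul]
    ring
  calc ∫ x, |c * (u x ^ 2 - v x ^ 2) - 2 * v x * w x| ∂ν
      = ∫ x, |q x * (u + v) x + w x * (u - v) x| ∂ν :=
        integral_congr_ae (h_factor.mono fun x hx => congrArg abs hx)
    _ ≤ ∫ x, (|q x * (u + v) x| + |w x * (u - v) x|) ∂ν :=
        integral_mono (hq.add hw).abs (hq.abs.add hw.abs) fun x => abs_add_le _ _
    _ = ∫ x, |q x * (u + v) x| ∂ν + ∫ x, |w x * (u - v) x| ∂ν := integral_add hq.abs hw.abs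
    _ ≤ ‖q‖ * ‖u + v‖ + ‖w‖ * ‖u - v‖ :=
        add_le_add (L2.integral_abs_mul_le _ _) (L2.integral_abs_mul_le _ _)

theorem HasDerivAt.tendsto_integral_abs_slope_sq_sub {Φ : ℝ → Lp ℝ 2 ν} {D : Lp ℝ 2 ν} {t₀ : ℝ}
    (hD : HasDerivAt Φ D t₀) :
    Tendsto (fun s : ℝ => ∫ x, |s⁻¹ * (Φ (t₀ + s) x ^ 2 - Φ t₀ x ^ 2) - 2 * Φ t₀ x * D x| ∂ν)
      (𝓝[≠] 0) (𝓝 0) := by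
  have hΦ : Tendsto (fun s : ℝ => Φ (t₀ + s)) (𝓝[≠] 0) (𝓝 (Φ t₀)) :=
    (hD.continuousAt.tendsto.comp
      ((continuous_const_add t₀).tendsto' 0 t₀ (add_zero t₀))).mono_left nhdsWithin_le_nhds
  have h_bound := ((hD.tendsto_slope_zero.sub_const D).norm.mul (hΦ.add_const (Φ t₀)).norm).add
    ((hΦ.sub_const (Φ t₀)).norm.const_mul ‖D‖)
  simp only [sub_self, norm_zero, zero_mul, mul_zero, add_zero] at h_bound
  exact squeeze_zero (fun s => integral_nonneg fun x => abs_nonneg _)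
    (fun s => L2.integral_abs_smul_sq_sub_sq_sub_le _ _ _ _) h_bound

lemma SignedMeasure.totalVariation_withDensityᵥ_univ {h : X → ℝ} (hi : Integrable h ν) :
    (SignedMeasure.totalVariation (ν.withDensityᵥ h) Set.univ).toReal = ∫ x, |h x| ∂ν := by
  set g : X → ℝ := hi.1.mk h
  have hg : StronglyMeasurable g := hi.1.stronglyMeasurable_mk
  have hae : h =ᵐ[ν] g := hi.1.ae_eq_mk
  have hgi : Integrable g ν := hi.congr hae
  have hjd := SignedMeasure.toJordanDecomposition_eq_of_eq_add_withDensity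
    (t := (0 : SignedMeasure X)) (s := ν.withDensityᵥ g) hg.measurable hgi
    VectorMeasure.MutuallySingular.zero_left (zero_add _).symm
  rw [WithDensityᵥEq.congr_ae hae, SignedMeasure.totalVariation, hjd]
  simp only [SignedMeasure.toJordanDecomposition_zero, JordanDecomposition.zero_posPart,
    JordanDecomposition.zero_negPart, zero_add]
  rw [Measure.add_apply, withDensity_apply _ MeasurableSet.univ,
    withDensity_apply _ MeasurableSet.univ, Measure.restrict_univ]
  have h_pos_add_neg : (∫⁻ x, ENNReal.ofReal (g x) ∂ν) + (∫⁻ x, ENNReal.ofReal (-g x) ∂ν)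
      = ∫⁻ x, ENNReal.ofReal |g x| ∂ν := by
    rw [← lintegral_add_left' hgi.aemeasurable.ennreal_ofReal]
    refine lintegral_congr fun x => ?_
    rcases le_or_gt 0 (g x) with hx | hx
    · rw [abs_of_nonneg hx, ENNReal.ofReal_eq_zero.2 (neg_nonpos.2 hx), add_zero]
    · rw [abs_of_neg hx, ENNReal.ofReal_eq_zero.2 hx.le, zero_add]
  rw [h_pos_add_neg,
    ← ofReal_integral_eq_lintegral_ofReal hgi.abs (ae_of_all _ fun x => abs_nonneg _),
    ENNReal.toReal_ofReal (integral_nonneg fun x => abs_nonneg _)]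
  exact integral_congr_ae (hae.mono fun x hx => congrArg abs hx.symm)

lemma Measure.toSignedMeasure_withDensity_ofReal {h : X → ℝ} (h_nonneg : 0 ≤ᵐ[ν] h)
    (hi : Integrable h ν) [IsFiniteMeasure (ν.withDensity fun x => ENNReal.ofReal (h x))] :
    (ν.withDensity fun x => ENNReal.ofReal (h x)).toSignedMeasure = ν.withDensityᵥ h := by
  rw [← withDensityᵥ_toReal hi.1.aemeasurable.ennreal_ofReal hi.lintegral_lt_top.ne]
  exact WithDensityᵥEq.congr_ae (h_nonneg.mono fun x hx => ENNReal.toReal_ofReal hx)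

end MeasureTheory

theorem l2_differentiable_tv_derivative_formula_general {X : Type*} [MeasurableSpace X]
    (ν : Measure X)
    (f : ℝ → X → ℝ) (hfnn : ∀ t x, 0 ≤ f t x)
    (μ : ℝ → Measure X)
    (hμ : ∀ t, μ t = ν.withDensity (fun x => ENNReal.ofReal (f t x)))
    (hfin : ∀ t, IsFiniteMeasure (μ t))
    (t₀ : ℝ)
    (Φ : ℝ → Lp ℝ 2 ν)
    (hΦ : ∀ t, (Φ t : X → ℝ) =ᵐ[ν] fun x => Real.sqrt (f t x))
    (D : Lp ℝ 2 ν)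
    (hD : HasDerivAt Φ D t₀) :
    Integrable (fun x => 2 * Real.sqrt (f t₀ x) * (D : X → ℝ) x) ν ∧
    Filter.Tendsto (fun s : ℝ =>
        (((s⁻¹ • (@Measure.toSignedMeasure X _ (μ (t₀ + s)) (hfin _) -
              @Measure.toSignedMeasure X _ (μ t₀) (hfin _))) -
            ν.withDensityᵥ (fun x => 2 * Real.sqrt (f t₀ x) * (D : X → ℝ) x)).totalVariation
          Set.univ).toReal)
      (nhdsWithin 0 {0}ᶜ) (nhds 0) := by
  obtain rfl : μ = fun t => ν.withDensity fun x => ENNReal.ofReal (f t x) := funext hμ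
  have hf_sq (t : ℝ) : f t =ᵐ[ν] fun x => Φ t x ^ 2 := by
    filter_upwards [hΦ t] with x hx
    rw [hx, Real.sq_sqrt (hfnn t x)]
  have hf_int (t : ℝ) : Integrable (f t) ν :=
    (L2.integrable_mul (Φ t) (Φ t)).congr (by simpa only [sq] using (hf_sq t).symm)
  set g := fun x => 2 * Real.sqrt (f t₀ x) * D x
  have hg_int : Integrable g ν := ((L2.integrable_mul (Φ t₀) D).const_mul 2).congr <| by
    filter_upwards [hΦ t₀] with x hx
    simp only [g, hx, mul_assoc]
  refine ⟨hg_int, (hD.tendsto_integral_abs_slope_sq_sub (ν := ν)).congr fun s => ?_⟩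
  have h_density : s⁻¹ • (ν.withDensityᵥ (f (t₀ + s)) - ν.withDensityᵥ (f t₀)) - ν.withDensityᵥ g
      = ν.withDensityᵥ (s⁻¹ • (f (t₀ + s) - f t₀) - g) := by
    rw [withDensityᵥ_sub (((hf_int _).sub (hf_int _)).smul _) hg_int, withDensityᵥ_smul,
      withDensityᵥ_sub (hf_int _) (hf_int _)]
  simp only [Measure.toSignedMeasure_withDensity_ofReal (ae_of_all _ (hfnn _)) (hf_int _),
    h_density]
  rw [SignedMeasure.totalVariation_withDensityᵥ_univ
    ((((hf_int _).sub (hf_int _)).smul _).sub hg_int)]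
  refine integral_congr_ae ?_
  filter_upwards [hf_sq (t₀ + s), hf_sq t₀, hΦ t₀] with x h₁ h₀ hΦ₀
  simp only [Pi.sub_apply, Pi.smul_apply, smul_eq_mul, g]
  rw [← hΦ₀, h₁, h₀]

/-- If a family of finite measures `μ(t) = f(t)·ν` is `L²(ν)`-differentiable at `t₀`, with
derivative `Φ'(t₀)` of `Φ(t) = f(t)^{1/2}` in `L²(ν)`, then the density
`2·f(t₀)^{1/2}·Φ'(t₀)` lies in `L¹(ν)` and the total-variation derivative of the family at
`t₀` exists and equals the signed measure `2·f(t₀)^{1/2}·Φ'(t₀)·ν`. -/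
theorem l2_differentiable_tv_derivative_formula {X : Type*} [MeasurableSpace X]
    (ν : Measure X) [SigmaFinite ν]
    (f : ℝ → X → ℝ) (hfnn : ∀ t x, 0 ≤ f t x)
    (μ : ℝ → Measure X)
    (hμ : ∀ t, μ t = ν.withDensity (fun x => ENNReal.ofReal (f t x)))
    (hfin : ∀ t, IsFiniteMeasure (μ t))
    (t₀ : ℝ)
    (Φ : ℝ → Lp ℝ 2 ν)
    (hΦ : ∀ t, (Φ t : X → ℝ) =ᵐ[ν] fun x => Real.sqrt (f t x))
    (D : Lp ℝ 2 ν)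
    (hD : HasDerivAt Φ D t₀) :
    Integrable (fun x => 2 * Real.sqrt (f t₀ x) * (D : X → ℝ) x) ν ∧
    Filter.Tendsto (fun s : ℝ =>
        (((s⁻¹ • (@Measure.toSignedMeasure X _ (μ (t₀ + s)) (hfin _) -
              @Measure.toSignedMeasure X _ (μ t₀) (hfin _))) -
            ν.withDensityᵥ (fun x => 2 * Real.sqrt (f t₀ x) * (D : X → ℝ) x)).totalVariation
          Set.univ).toReal)
      (nhdsWithin 0 {0}ᶜ) (nhds 0) :=
  l2_differentiable_tv_derivative_formula_general ν f hfnn μ hμ hfin t₀ Φ hΦ D hD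
end

section
/- With p(x,t) as defined (p(x,t) = 1 + tφ(x) if tφ(x) ≥ 0, exp(tφ(x)) otherwise, for bounded measurable φ with ∫φ dμ = 0), the curve of probability measures μ(t) = (p(·,t)/c(t))·μ, where c(t) = ∫ p(x,t) dμ(x), satisfies μ(0) = μ and is differentiable at t = 0 in total variation norm with derivative μ'(0) = φ·μ. -/
/-!
We have `p(x, t) = piecewiseExp (t φ(x))`, and `piecewiseExp s` agrees with `1 + s` up to `s²`
for `|s| ≤ 1`; so uniformly in `x`, `p(x, t) = 1 + t φ(x) + O(t²)`. Integrating and using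
`∫ φ dμ = 0` gives `c(t) = 1 + O(t²)`, hence the density `t⁻¹ (p(·, t) / c(t) - 1) - φ`
of `t⁻¹ (μ(t) - μ) - φ·μ` is `O(t)` uniformly. The total variation of `g·μ` is `∫ |g| dμ`,
so it is `O(t)` as well.
-/

open MeasureTheory

noncomputable def piecewiseExp (s : ℝ) : ℝ := if 0 ≤ s then 1 + s else Real.exp s

lemma measurable_piecewiseExp : Measurable piecewiseExp :=
  Measurable.ite measurableSet_Ici (measurable_const.add measurable_id) Real.measurable_exp

lemma abs_piecewiseExp_sub_one_add_le {s : ℝ} (hs : |s| ≤ 1) :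
    |piecewiseExp s - (1 + s)| ≤ s ^ 2 := by
  unfold piecewiseExp
  split_ifs
  · simp only [sub_self, abs_zero]
    positivity
  · rw [sub_add_eq_sub_sub]
    exact Real.abs_exp_sub_one_sub_id_le hs

lemma abs_piecewiseExp_mul_sub_le {t a C : ℝ} (ha : |a| ≤ C) (htC : |t| * C ≤ 1) :
    |piecewiseExp (t * a) - (1 + t * a)| ≤ C ^ 2 * t ^ 2 := by
  have hta : |t * a| ≤ |t| * C := by
    rw [abs_mul]
    exact mul_le_mul_of_nonneg_left ha (abs_nonneg t)
  calc |piecewiseExp (t * a) - (1 + t * a)| ≤ |t * a| ^ 2 := by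
        rw [sq_abs]
        exact abs_piecewiseExp_sub_one_add_le (hta.trans htC)
    _ ≤ (|t| * C) ^ 2 := by gcongr
    _ = C ^ 2 * t ^ 2 := by rw [mul_pow, sq_abs, mul_comm]

lemma abs_div_sub_one_sub_le {a b c ε : ℝ} (ha : |a - (1 + b)| ≤ ε) (hc : |c - 1| ≤ ε)
    (hb : |b| ≤ 1) (hε : ε ≤ 1 / 2) : |a / c - 1 - b| ≤ 6 * ε := by
  have hc_half : 1 / 2 ≤ c := by linarith [(abs_le.1 hc).1]
  have hc_pos : 0 < c := by linarith
  have hbc : |b * (c - 1)| ≤ ε := by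
    rw [abs_mul]
    nlinarith [abs_nonneg b, abs_nonneg (c - 1)]
  have hnum : |(a - (1 + b)) - (c - 1) - b * (c - 1)| ≤ 3 * ε := by
    linarith [abs_sub (a - (1 + b) - (c - 1)) (b * (c - 1)), abs_sub (a - (1 + b)) (c - 1)]
  calc |a / c - 1 - b| = |(a - (1 + b)) - (c - 1) - b * (c - 1)| / c := by
        rw [← abs_of_pos hc_pos, ← abs_div, abs_of_pos hc_pos]
        congr 1
        field_simp
        ring
    _ ≤ 3 * ε / (1 / 2) := by
        gcongr
        linarith [abs_nonneg (a - (1 + b))]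
    _ = 6 * ε := by ring

namespace MeasureTheory

variable {X : Type*} [MeasurableSpace X] {μ : Measure X}

lemma totalVariation_withDensityᵥ_univ {g : X → ℝ} (hg : Integrable g μ) :
    ((SignedMeasure.totalVariation (μ.withDensityᵥ g)) Set.univ).toReal = ∫ x, |g x| ∂μ := by
  rw [SignedMeasure.totalVariation_eq_variation, Measure.variation_withDensityᵥ hg,
    withDensity_apply _ MeasurableSet.univ, Measure.restrict_univ,
    ← ofReal_integral_norm_eq_lintegral_enorm hg,
    ENNReal.toReal_ofReal (integral_nonneg fun _ => norm_nonneg _)]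
  rfl

lemma smul_withDensityᵥ_sub_sub {f g φ : X → ℝ} (hf : Integrable f μ) (hg : Integrable g μ)
    (hφ : Integrable φ μ) (r : ℝ) :
    r • (μ.withDensityᵥ f - μ.withDensityᵥ g) - μ.withDensityᵥ φ =
      μ.withDensityᵥ (fun x => r * (f x - g x) - φ x) := by
  change _ = μ.withDensityᵥ (r • (f - g) - φ)
  rw [withDensityᵥ_sub ((hf.sub hg).smul r) hφ, withDensityᵥ_smul, withDensityᵥ_sub hf hg]

lemma abs_integral_sub_one_le [IsProbabilityMeasure μ] {q ψ : X → ℝ} {ε : ℝ}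
    (hq : Integrable q μ) (hψ : Integrable ψ μ) (hmean : ∫ x, ψ x ∂μ = 0)
    (hqψ : ∀ x, |q x - (1 + ψ x)| ≤ ε) : |∫ x, q x ∂μ - 1| ≤ ε := by
  have h : ∫ x, q x ∂μ - 1 = ∫ x, q x - (1 + ψ x) ∂μ := by
    have h1ψ : Integrable (fun x => 1 + ψ x) μ := (integrable_const 1).add hψ
    simp [integral_sub hq h1ψ, integral_add (integrable_const 1) hψ, hmean]
  simpa [h] using norm_integral_le_of_norm_le_const (μ := μ)
    (Filter.Eventually.of_forall fun x => (Real.norm_eq_abs _).trans_le (hqψ x))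

lemma totalVariation_diffQuotient_withDensityᵥ_le [IsProbabilityMeasure μ] {q φ : X → ℝ}
    {t K : ℝ} (hq : AEStronglyMeasurable q μ) (hφ : Integrable φ μ) (hmean : ∫ x, φ x ∂μ = 0)
    (ht : t ≠ 0) (htφ : ∀ x, |t * φ x| ≤ 1) (hqφ : ∀ x, |q x - (1 + t * φ x)| ≤ K * t ^ 2)
    (hKt : K * t ^ 2 ≤ 1 / 2) :
    (SignedMeasure.totalVariation (t⁻¹ • (μ.withDensityᵥ (fun x => q x / ∫ y, q y ∂μ) -
        μ.withDensityᵥ (fun _ => 1)) - μ.withDensityᵥ φ) Set.univ).toReal ≤ 6 * K * |t| := by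
  have hqi : Integrable q μ := by
    refine Integrable.of_bound hq (K * t ^ 2 + 2) (ae_of_all _ fun x => ?_)
    rw [Real.norm_eq_abs]
    linarith [abs_sub_abs_le_abs_sub (q x) (1 + t * φ x), hqφ x, abs_add_le 1 (t * φ x), htφ x,
      abs_one (α := ℝ)]
  set c := ∫ y, q y ∂μ
  have hc : |c - 1| ≤ K * t ^ 2 :=
    abs_integral_sub_one_le hqi (hφ.const_mul t) (by rw [integral_const_mul, hmean, mul_zero]) hqφ
  have hg : ∀ x, |t⁻¹ * (q x / c - 1) - φ x| ≤ 6 * K * |t| := fun x => by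
    have hdev := abs_div_sub_one_sub_le (hqφ x) hc (htφ x) hKt
    calc |t⁻¹ * (q x / c - 1) - φ x| = |t|⁻¹ * |q x / c - 1 - t * φ x| := by
          rw [← abs_inv, ← abs_mul]
          congr 1
          field_simp
      _ ≤ |t|⁻¹ * (6 * (K * t ^ 2)) := by gcongr
      _ = 6 * K * |t| := by
          rw [← sq_abs t]
          field_simp
  have hgi : Integrable (fun x => t⁻¹ * (q x / c - 1) - φ x) μ :=
    (((hqi.div_const c).sub (integrable_const 1)).const_mul t⁻¹).sub hφ
  rw [smul_withDensityᵥ_sub_sub (hqi.div_const c) (integrable_const 1) hφ,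
    totalVariation_withDensityᵥ_univ hgi]
  exact (integral_mono hgi.abs (integrable_const _) hg).trans_eq (by simp)

end MeasureTheory

/-- With `p(x,t) = 1 + t·φ(x)` if `t·φ(x) ≥ 0` and `exp(t·φ(x))` otherwise, for bounded
measurable `φ` with `∫ φ dμ = 0`, the normalized curve of probability measures
`μ(t) = (p(·,t)/c(t))·μ`, where `c(t) = ∫ p(x,t) dμ`, satisfies `μ(0) = μ` and is
differentiable at `t = 0` in the total variation norm with derivative `μ'(0) = φ·μ`. -/
theorem piecewise_curve_tv_derivative {X : Type*} [MeasurableSpace X]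
    (μ : Measure X) [IsProbabilityMeasure μ]
    (φ : X → ℝ) (hφm : Measurable φ) (C : ℝ) (hC : ∀ x, |φ x| ≤ C)
    (hmean : ∫ x, φ x ∂μ = 0)
    (p : X → ℝ → ℝ)
    (hp : ∀ x t, p x t = if 0 ≤ t * φ x then 1 + t * φ x else Real.exp (t * φ x))
    (c : ℝ → ℝ) (hc : ∀ t, c t = ∫ x, p x t ∂μ) :
    μ.withDensityᵥ (fun x => p x 0 / c 0) = μ.toSignedMeasure ∧
    Filter.Tendsto (fun t : ℝ =>
        ((SignedMeasure.totalVariation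
            (t⁻¹ • (μ.withDensityᵥ (fun x => p x t / c t) -
              μ.withDensityᵥ (fun x => p x 0 / c 0)) -
            μ.withDensityᵥ φ) Set.univ).toReal))
      (nhdsWithin 0 {0}ᶜ) (nhds 0) := by
  have hpt : ∀ x t, p x t = piecewiseExp (t * φ x) := hp
  have hunit : (fun x => p x 0 / c 0) = fun _ => 1 := by simp [hc, hp]
  refine ⟨?_, ?_⟩
  · ext s hs
    rw [hunit, withDensityᵥ_apply (integrable_const 1) hs,
      Measure.toSignedMeasure_apply_measurable hs]
    simp
  have hφ : ∀ x, |φ x| ≤ |C| := fun x => (hC x).trans (le_abs_self C)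
  have hφi : Integrable φ μ :=
    Integrable.of_bound hφm.aestronglyMeasurable C (ae_of_all _ hC)
  have hsmall : ∀ᶠ t in nhdsWithin (0 : ℝ) {0}ᶜ, t ≠ 0 ∧ |t| * |C| < 1 / 2 :=
    eventually_mem_nhdsWithin.and <| Filter.Eventually.filter_mono nhdsWithin_le_nhds <|
      ((continuous_abs.mul continuous_const).tendsto' 0 0 (by simp)).eventually
        (gt_mem_nhds (by norm_num))
  have hlinear : Filter.Tendsto (fun t : ℝ => 6 * |C| ^ 2 * |t|) (nhdsWithin 0 {0}ᶜ) (nhds 0) :=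
    ((continuous_const.mul continuous_abs).tendsto' (0 : ℝ) 0 (by simp)).mono_left
      nhdsWithin_le_nhds
  refine squeeze_zero' (Filter.Eventually.of_forall fun _ => ENNReal.toReal_nonneg)
    (hsmall.mono fun t ⟨ht, htC⟩ => ?_) hlinear
  rw [hunit, hc t]
  simp only [hpt]
  refine totalVariation_diffQuotient_withDensityᵥ_le (q := fun x => piecewiseExp (t * φ x))
    (measurable_piecewiseExp.comp (hφm.const_mul t)).aestronglyMeasurable hφi hmean ht
    (fun x => ?_) (fun x => abs_piecewiseExp_mul_sub_le (hφ x) (by linarith)) ?_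
  · rw [abs_mul]
    nlinarith [mul_le_mul_of_nonneg_left (hφ x) (abs_nonneg t)]
  · rw [← sq_abs t, ← mul_pow, mul_comm]
    nlinarith [mul_nonneg (abs_nonneg t) (abs_nonneg C)]
end

section
/- For an exponential-type curve through a probability measure μ: given bounded measurable φ with ∫ φ dμ = 0, the curve μ(t) = e^{tφ}/Z(t) · μ with Z(t) = ∫ e^{tφ} dμ is L²-differentiable at t = 0, i.e., t ↦ (e^{tφ}/Z(t))^{1/2} is differentiable into L²(μ) at 0, with derivative φ/2, and the Fisher norm of the velocity μ'(0) = φ·μ equals ‖φ‖_{L²(μ)}. -/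
/-!
Writing `y = tφ(x)`, one has `√(e^y / z) = 1 + y/2 + O(y² + (z - 1))` uniformly for `|y| ≤ 2`
and `z ≥ 1`. Since `φ` has mean zero, integrating `1 + tφ ≤ e^{tφ} ≤ 1 + tφ + t²C²` (the upper
bound for `|t|C ≤ 1`) gives `1 ≤ Z(t) ≤ 1 + t²C²`. Hence `Φ(t) - Φ(0) - t·φ/2` is `O(t²)`
uniformly on `X`, so also in `L²` of the probability measure `μ`, which is differentiability
at `0` with derivative `φ/2`. The Fisher-norm identity is the integral formula for the `L²`
norm.
-/

open MeasureTheory ProbabilityTheory Filter Real Asymptotics Topology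
open scoped ENNReal

theorem hasDerivAt_of_norm_sub_le_mul_sq {𝕜 E : Type*} [NontriviallyNormedField 𝕜]
    [NormedAddCommGroup E] [NormedSpace 𝕜 E] {f : 𝕜 → E} {f' : E} {x : 𝕜} (K : ℝ)
    (h : ∀ᶠ t in 𝓝 0, ‖f (x + t) - f x - t • f'‖ ≤ K * ‖t‖ ^ 2) :
    HasDerivAt f f' x :=
  hasDerivAt_iff_isLittleO_nhds_zero.2 <|
    (IsBigO.of_bound K (h.mono fun t ht => by rwa [norm_pow])).trans_isLittleO
      (isLittleO_pow_id one_lt_two)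

theorem toReal_eLpNorm_two_eq_sqrt_integral_sq {X : Type*} [MeasurableSpace X] {μ : Measure X}
    {f : X → ℝ} (hf : AEStronglyMeasurable f μ) :
    (eLpNorm f 2 μ).toReal = √(∫ x, f x ^ 2 ∂μ) := by
  rw [toReal_eLpNorm hf, lpNorm_eq_integral_norm_rpow_toReal two_ne_zero ENNReal.ofNat_ne_top hf,
    sqrt_eq_rpow]
  simp

theorem abs_sqrt_exp_div_sub_one_sub_half_le {y z : ℝ} (hy : |y| ≤ 2) (hz : 1 ≤ z) :
    |√(exp y / z) - 1 - y / 2| ≤ y ^ 2 / 4 + 3 * (z - 1) := by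
  set u := √z
  have hu : 1 ≤ u := one_le_sqrt.2 hz
  have hu_le : u ≤ z := by nlinarith [sq_sqrt (zero_le_one.trans hz)]
  have hsqrt : √(exp y / z) = exp (y / 2) / u := by
    rw [sqrt_div (exp_nonneg _), ← exp_half]
  have htaylor : |exp (y / 2) - 1 - y / 2| ≤ (y / 2) ^ 2 :=
    abs_exp_sub_one_sub_id_le (by rw [abs_div, abs_two]; linarith)
  have hexp : exp (y / 2) ≤ 3 := by
    calc exp (y / 2) ≤ exp 1 := exp_le_exp.2 (by linarith [le_abs_self y])
      _ ≤ 3 := exp_one_lt_d9.le.trans (by norm_num)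
  have hinv : |1 / u - 1| ≤ z - 1 := by
    have hinv_mul : 1 / u * u = 1 := one_div_mul_cancel (by positivity)
    rw [abs_le]; constructor <;> nlinarith
  calc |√(exp y / z) - 1 - y / 2|
      = |(exp (y / 2) - 1 - y / 2) + exp (y / 2) * (1 / u - 1)| := by
        rw [hsqrt]; congr 1; field_simp; ring
    _ ≤ |exp (y / 2) - 1 - y / 2| + exp (y / 2) * |1 / u - 1| := by
        rw [← abs_of_pos (exp_pos (y / 2)), ← abs_mul, abs_of_pos (exp_pos (y / 2))]
        exact abs_add_le _ _
    _ ≤ (y / 2) ^ 2 + 3 * (z - 1) := by gcongr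
    _ = y ^ 2 / 4 + 3 * (z - 1) := by ring

section ExponentialTilt

variable {X : Type*} [MeasurableSpace X] {μ : Measure X} [IsProbabilityMeasure μ] {φ : X → ℝ}

theorem one_le_integral_exp_mul (t : ℝ) (hexp : Integrable (fun x => exp (t * φ x)) μ)
    (hφ : Integrable φ μ) (hmean : ∫ x, φ x ∂μ = 0) :
    1 ≤ ∫ x, exp (t * φ x) ∂μ :=
  calc (1 : ℝ) = ∫ x, (1 + t * φ x) ∂μ := by
        rw [integral_add (integrable_const 1) (hφ.const_mul t), integral_const_mul, hmean]
        simp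
    _ ≤ ∫ x, exp (t * φ x) ∂μ :=
        integral_mono ((integrable_const 1).add (hφ.const_mul t)) hexp
          fun x => by linarith [add_one_le_exp (t * φ x)]

theorem integral_exp_mul_le_one_add_sq {C t : ℝ} (hφ : AEMeasurable φ μ)
    (hC : ∀ᵐ x ∂μ, |φ x| ≤ C) (hmean : ∫ x, φ x ∂μ = 0) (ht : |t| * C ≤ 1) :
    ∫ x, exp (t * φ x) ∂μ ≤ 1 + t ^ 2 * C ^ 2 := by
  have hφ_int : Integrable φ μ := .of_bound hφ.aestronglyMeasurable C (by simpa using hC)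
  have hquad : Integrable (fun x => 1 + t ^ 2 * C ^ 2 + t * φ x) μ :=
    (integrable_const _).add (hφ_int.const_mul t)
  calc ∫ x, exp (t * φ x) ∂μ ≤ ∫ x, (1 + t ^ 2 * C ^ 2 + t * φ x) ∂μ := by
        refine integral_mono_ae (integrable_exp_mul_of_mem_Icc hφ
          (hC.mono fun x hx => abs_le.1 hx)) hquad (hC.mono fun x hx => ?_)
        have hty : |t * φ x| ≤ |t| * C := by
          rw [abs_mul]; exact mul_le_mul_of_nonneg_left hx (abs_nonneg t)
        have hsq : (t * φ x) ^ 2 ≤ t ^ 2 * C ^ 2 := by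
          simpa only [mul_pow, sq_abs] using pow_le_pow_left₀ (abs_nonneg _) hty 2
        linarith [(abs_le.1 (abs_exp_sub_one_sub_id_le (hty.trans ht))).2]
    _ = 1 + t ^ 2 * C ^ 2 := by
        rw [integral_add (integrable_const _) (hφ_int.const_mul t), integral_const_mul, hmean]
        simp

theorem norm_sub_sub_smul_le_of_sqrt_exp_div {p : ℝ≥0∞} {C t z : ℝ} {F G D : Lp ℝ p μ}
    (hC : ∀ᵐ x ∂μ, |φ x| ≤ C) (ht : |t| * C ≤ 1) (hz_ge : 1 ≤ z) (hz_le : z ≤ 1 + t ^ 2 * C ^ 2)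
    (hF : (F : X → ℝ) =ᵐ[μ] fun x => √(exp (t * φ x) / z)) (hG : (G : X → ℝ) =ᵐ[μ] 1)
    (hD : (D : X → ℝ) =ᵐ[μ] fun x => φ x / 2) :
    ‖F - G - t • D‖ ≤ 13 / 4 * C ^ 2 * t ^ 2 := by
  refine (Lp.norm_le_of_ae_bound (C := 13 / 4 * C ^ 2 * t ^ 2) (by positivity) ?_).trans
    (by simp [measureUnivNNReal])
  filter_upwards [Lp.coeFn_sub (F - G) (t • D), Lp.coeFn_sub F G, Lp.coeFn_smul t D,
    hF, hG, hD, hC] with x hsub hsub' hsmul hFx hGx hDx hCx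
  have hty : |t * φ x| ≤ |t| * C := by
    rw [abs_mul]; exact mul_le_mul_of_nonneg_left hCx (abs_nonneg t)
  simp only [hsub, hsub', hsmul, Pi.sub_apply, Pi.smul_apply, hFx, hGx, hDx, Pi.one_apply,
    smul_eq_mul, norm_eq_abs]
  calc |√(exp (t * φ x) / z) - 1 - t * (φ x / 2)|
      ≤ (t * φ x) ^ 2 / 4 + 3 * (z - 1) := by
        rw [← mul_div_assoc]
        exact abs_sqrt_exp_div_sub_one_sub_half_le (by linarith) hz_ge
    _ ≤ 13 / 4 * C ^ 2 * t ^ 2 := by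
        have hsq := pow_le_pow_left₀ (abs_nonneg _) hty 2
        rw [mul_pow, sq_abs, sq_abs] at hsq
        linarith

end ExponentialTilt

/-- For the exponential-type curve `μ(t) = e^{tφ}/Z(t)·μ` through a probability measure `μ`,
with `φ` bounded measurable of mean zero and partition function `Z(t) = ∫ e^{tφ} dμ`, the
curve of square-root densities `Φ(t) = (e^{tφ}/Z(t))^{1/2} ∈ L²(μ)` is differentiable at
`t = 0` with derivative `φ/2`, and the Fisher norm of the velocity `μ'(0) = φ·μ`, namely
`(∫ φ² dμ)^{1/2}`, equals `‖φ‖_{L²(μ)}`. -/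
theorem exponential_curve_l2_differentiable {X : Type*} [MeasurableSpace X]
    (μ : Measure X) [IsProbabilityMeasure μ]
    (φ : X → ℝ) (hφm : Measurable φ) (C : ℝ) (hC : ∀ x, |φ x| ≤ C)
    (hmean : ∫ x, φ x ∂μ = 0)
    (Z : ℝ → ℝ) (hZ : ∀ t, Z t = ∫ x, Real.exp (t * φ x) ∂μ)
    (Φ : ℝ → Lp ℝ 2 μ)
    (hΦ : ∀ t, (Φ t : X → ℝ) =ᵐ[μ] fun x => Real.sqrt (Real.exp (t * φ x) / Z t))
    (D : Lp ℝ 2 μ) (hD : (D : X → ℝ) =ᵐ[μ] fun x => φ x / 2) :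
    HasDerivAt Φ D 0 ∧
    Real.sqrt (∫ x, φ x ^ 2 ∂μ) = (eLpNorm φ 2 μ).toReal := by
  have hφC : ∀ᵐ x ∂μ, |φ x| ≤ C := ae_of_all _ hC
  have hZ_ge (t : ℝ) : 1 ≤ Z t := hZ t ▸ one_le_integral_exp_mul t
    (integrable_exp_mul_of_mem_Icc hφm.aemeasurable
      (hφC.mono fun x hx => abs_le.1 hx))
    (.of_bound hφm.aestronglyMeasurable C (by simpa using hφC)) hmean
  have hZ_le {t : ℝ} (ht : |t| * C ≤ 1) : Z t ≤ 1 + t ^ 2 * C ^ 2 :=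
    hZ t ▸ integral_exp_mul_le_one_add_sq hφm.aemeasurable hφC hmean ht
  have hΦ0 : (Φ 0 : X → ℝ) =ᵐ[μ] 1 := (hΦ 0).trans (ae_of_all _ fun x => by simp [hZ])
  have hsmall : ∀ᶠ t in 𝓝 (0 : ℝ), |t| * C < 1 :=
    (continuous_abs.mul continuous_const).continuousAt.eventually_lt continuousAt_const
      (by simp)
  refine ⟨hasDerivAt_of_norm_sub_le_mul_sq (13 / 4 * C ^ 2) (hsmall.mono fun t ht => ?_),
    (toReal_eLpNorm_two_eq_sqrt_integral_sq hφm.aestronglyMeasurable).symm⟩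
  rw [zero_add, norm_eq_abs, sq_abs]
  exact norm_sub_sub_smul_le_of_sqrt_exp_div hφC ht.le (hZ_ge t) (hZ_le ht.le) (hΦ t) hΦ0 hD
end
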